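/- With A, ∂, t and the residue pairing as above, the pairing ⟨x, g⟩ = Res_{s=0}(x(s)g(-s)) on I^{a,b} × I^{-b,-a} → A is horizontal for the connections: ∂⟨x, g⟩ = ⟨∂x, g⟩ + ⟨x, ∂g⟩ for all x ∈ I^{a,b}, g ∈ I^{-b,-a}, where the connection on each factor is induced by ∂(s^l h·t^s) = s^l ∂(h)·t^s + s^{l+1}(h/t)·t^s. -/

import Mathlib

/-! The connection splits as `∂ = ∂₀ + t⁻¹ s`, where `∂₀` applies `∂` to the
coefficients. Since `∂₀` acts coefficientwise, the Leibniz rule gives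
`∂⟨x, g⟩ = ⟨∂₀x, g⟩ + ⟨x, ∂₀g⟩`.
Multiplication by `u s` (any `u ∈ A`) is skew-adjoint for the residue pairing, because
`Res(s x(s) · g(-s)) = -Res(x(s) · (-s) g(-s))`; so the two `t⁻¹ s`-terms cancel. -/

open LaurentPolynomial

variable {A : Type*} [CommRing A]

/-- The connection `∂` on the free module `A[s,s⁻¹]·t^s` of rank one
(identified with `A[s,s⁻¹]` via the generator `t^s`), defined by
`∂(s^l g · t^s) = s^l ∂(g) · t^s + s^{l+1} (g/t) · t^s`. -/
noncomputable def DM (D : Derivation ℤ A A) (t : Aˣ) (x : LaurentPolynomial A) :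
    LaurentPolynomial A :=
  let y : LaurentPolynomial A := AddMonoidAlgebra.ofCoeff (Finsupp.mapRange ⇑D (map_zero D) x.coeff)
  y + T 1 * C (↑t⁻¹ : A) * x

/-- The residue pairing `⟨x, g⟩ = Res_{s=0}(x(s) g(-s))`, the coefficient of `s⁻¹`
in `x(s)·g(-s)`: concretely `∑_k (-1)^{k+1} x_k g_{-1-k}`. -/
noncomputable def resPair (x g : LaurentPolynomial A) : A :=
  x.coeff.sum fun k c => ((Int.negOnePow (k + 1) : ℤˣ) : ℤ) • (c * g.coeff (-1 - k))

/-- `s^c A[s]·t^s`: the `A`-submodule of `A[s,s⁻¹]·t^s` spanned by `s^k t^s`, `k ≥ c`. -/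
noncomputable def Ipow (c : ℤ) : Submodule A (LaurentPolynomial A) :=
  Submodule.span A ((fun k : ℤ => (T k : LaurentPolynomial A)) '' {k : ℤ | c ≤ k})

open AddMonoidAlgebra

namespace LaurentPolynomial

noncomputable def coeffDeriv (D : Derivation ℤ A A) :
    LaurentPolynomial A →+ LaurentPolynomial A where
  toFun x := ofCoeff (Finsupp.mapRange D (map_zero D) x.coeff)
  map_zero' := by simp
  map_add' x y := by simp [coeff_add, Finsupp.mapRange_add (map_add D), ofCoeff_add]

@[simp]
lemma coeff_coeffDeriv (D : Derivation ℤ A A) (x : LaurentPolynomial A) (n : ℤ) :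
    (coeffDeriv D x).coeff n = D (x.coeff n) :=
  rfl

lemma coeffDeriv_single (D : Derivation ℤ A A) (k : ℤ) (c : A) :
    coeffDeriv D (single k c) = single k (D c) := by
  change ofCoeff (Finsupp.mapRange D _ (Finsupp.single k c)) = _
  rw [Finsupp.mapRange_single, ofCoeff_single]

end LaurentPolynomial

lemma DM_eq_coeffDeriv_add_single_mul (D : Derivation ℤ A A) (t : Aˣ) (x : LaurentPolynomial A) :
    DM D t x = coeffDeriv D x + single 1 (↑t⁻¹ : A) * x := by
  rw [single_eq_C_mul_T, mul_comm (C _)]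
  rfl

lemma resPair_zero_left (g : LaurentPolynomial A) : resPair 0 g = 0 := by
  simp [resPair]

lemma resPair_add_left (x₁ x₂ g : LaurentPolynomial A) :
    resPair (x₁ + x₂) g = resPair x₁ g + resPair x₂ g := by
  unfold resPair
  rw [coeff_add]
  exact Finsupp.sum_add_index' (by simp) fun _ _ _ => by rw [add_mul, smul_add]

lemma resPair_add_right (x g₁ g₂ : LaurentPolynomial A) :
    resPair x (g₁ + g₂) = resPair x g₁ + resPair x g₂ := by
  unfold resPair
  rw [← Finsupp.sum_add]
  refine Finsupp.sum_congr fun k _ => ?_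
  rw [coeff_add, Finsupp.add_apply, mul_add, smul_add]

lemma resPair_single_left (k : ℤ) (c : A) (g : LaurentPolynomial A) :
    resPair (single k c) g =
      ((Int.negOnePow (k + 1) : ℤˣ) : ℤ) • (c * g.coeff (-1 - k)) := by
  rw [resPair, coeff_single, Finsupp.sum_single_index (by simp)]

lemma resPair_single_one_mul (u : A) (x g : LaurentPolynomial A) :
    resPair (single 1 u * x) g = -resPair x (single 1 u * g) := by
  induction x using AddMonoidAlgebra.induction_linear with
  | zero => simp [resPair_zero_left]
  | add x₁ x₂ h₁ h₂ => rw [mul_add, resPair_add_left, resPair_add_left, h₁, h₂, neg_add]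
  | single k c =>
    rw [single_mul_single, resPair_single_left, resPair_single_left, coeff_single_mul_apply,
      show 1 + k + 1 = (k + 1) + 1 by ring, Int.negOnePow_succ,
      show -1 - (1 + k) = -1 + (-1 - k) by ring, Units.val_neg, neg_smul, mul_assoc, mul_left_comm u c]

lemma derivation_resPair_coeffDeriv (D : Derivation ℤ A A) (x g : LaurentPolynomial A) :
    D (resPair x g) = resPair (coeffDeriv D x) g + resPair x (coeffDeriv D g) := by
  induction x using AddMonoidAlgebra.induction_linear with
  | zero => simp [resPair_zero_left]
  | add x₁ x₂ h₁ h₂ =>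
    rw [map_add, resPair_add_left, resPair_add_left, resPair_add_left, map_add, h₁, h₂]
    abel
  | single k c =>
    simp only [resPair_single_left, coeffDeriv_single, coeff_coeffDeriv, map_zsmul, D.leibniz,
      smul_eq_mul, smul_add]
    ring

lemma derivation_resPair (D : Derivation ℤ A A) (t : Aˣ) (x g : LaurentPolynomial A) :
    D (resPair x g) = resPair (DM D t x) g + resPair x (DM D t g) := by
  rw [DM_eq_coeffDeriv_add_single_mul, DM_eq_coeffDeriv_add_single_mul, resPair_add_left,
    resPair_add_right, resPair_single_one_mul, derivation_resPair_coeffDeriv]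
  abel

theorem resPair_horizontal_general (D : Derivation ℤ A A) (t : Aˣ) (a b : ℤ) :
    ∀ x ∈ Ipow (A := A) a, ∀ g ∈ Ipow (A := A) (-b),
      D (resPair x g) = resPair (DM D t x) g + resPair x (DM D t g) :=
  fun x _ g _ => derivation_resPair D t x g

/-- The residue pairing is horizontal for the connections:
`∂⟨x, g⟩ = ⟨∂x, g⟩ + ⟨x, ∂g⟩` for `x ∈ I^{a,b}`, `g ∈ I^{-b,-a}`. -/
theorem resPair_horizontal [Algebra ℚ A] (D : Derivation ℤ A A) (t : Aˣ)
    (ht : D (↑t : A) = 1) (a b : ℤ) (hab : a ≤ b) :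
    ∀ x ∈ Ipow (A := A) a, ∀ g ∈ Ipow (A := A) (-b),
      D (resPair x g) = resPair (DM D t x) g + resPair x (DM D t g) :=
  resPair_horizontal_general D t a b
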